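/- Let 0 < S₀ < S₁ and define S_opt : [0,1] → ℝ by S_opt(x) = S₀ for 0 ≤ x ≤ 1/2, S_opt(x) = S₀/(2(1−x)) for 1/2 < x < 1 − S₀/(2S₁), and S_opt(x) = S₁ for 1 − S₀/(2S₁) ≤ x ≤ 1. If S : [0,1] → ℝ is measurable with S₀ ≤ S(x) ≤ S₁ for all x and (1/2)·(∫₀¹ S dx)² = (1 + (1/2)·log(S₁/S₀)) · ∫₀¹ (1−x)·S(x)² dx, then S(x) = S_opt(x) for almost every x ∈ [0,1]. -/

import Mathlib

open MeasureTheory intervalIntegral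

/-- The optimal Seebeck profile. -/
noncomputable def Sopt (S₀ S₁ : ℝ) (x : ℝ) : ℝ :=
  if x ≤ 1/2 then S₀
  else if x < 1 - S₀ / (2 * S₁) then S₀ / (2 * (1 - x))
  else S₁

/-!
With `t = ∫ S`, `L = log (S₁ / S₀)` and `c = t / (2 + L)`, the hypothesis says
`∫ (2 c S - (1 - x) S²) = (2 + L) c²`. For fixed `x < 1` the concave quadratic
`s ↦ 2 c s - (1 - x) s²` on `[S₀, S₁]` is maximised at the clamp `T x` of `c / (1 - x)` to
`[S₀, S₁]`, and falls short of its maximum by at least `(1 - x) (s - T x)²`. The integral of the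
pointwise maximum is explicit: it is at least `(2 + L) c²` only when `c = S₀ / 2`, and then
`T = S_opt` and equality holds. So the pointwise shortfall integrates to zero and `S = S_opt` a.e.
-/

open Real Set

noncomputable def lagrangian (c x s : ℝ) : ℝ := 2 * c * s - (1 - x) * s ^ 2

-- At `x = 1` the quotient is the junk value `c / 0 = 0`; only `x < 1` matters.
noncomputable def clampedProfile (S₀ S₁ c x : ℝ) : ℝ := max S₀ (min S₁ (c / (1 - x)))

-- The variational inequality characterising `max a (min b y)` as the projection of `y` on `[a, b]`.
theorem sub_clamp_mul_sub_clamp_nonpos {a b y s : ℝ} (hs : s ∈ Icc a b) :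
    (y - max a (min b y)) * (s - max a (min b y)) ≤ 0 := by
  obtain ⟨has, hsb⟩ := hs
  rcases le_total y a with hya | hay
  · rw [max_eq_left ((min_le_right b y).trans hya)]
    nlinarith
  rcases le_total y b with hyb | hby
  · simp only [min_eq_right hyb, max_eq_right hay, sub_self, zero_mul, le_refl]
  · rw [min_eq_left hby, max_eq_right (has.trans hsb)]
    nlinarith

theorem lagrangian_add_sq_sub_clampedProfile_le {S₀ S₁ c x s : ℝ} (hx : x < 1)
    (hs : s ∈ Icc S₀ S₁) :
    lagrangian c x s + (1 - x) * (s - clampedProfile S₀ S₁ c x) ^ 2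
      ≤ lagrangian c x (clampedProfile S₀ S₁ c x) := by
  have hα : 0 < 1 - x := by linarith
  -- With `c = (1 - x) y`, the difference of the two sides is `2 (1 - x) (y - T) (T - s)`.
  obtain ⟨y, rfl⟩ : ∃ y, c = (1 - x) * y := ⟨c / (1 - x), (mul_div_cancel₀ _ hα.ne').symm⟩
  have hproj := mul_nonpos_of_nonneg_of_nonpos (by positivity : 0 ≤ 2 * (1 - x))
    (sub_clamp_mul_sub_clamp_nonpos (y := y) hs)
  rw [clampedProfile, mul_div_cancel_left₀ _ hα.ne']
  unfold lagrangian
  linarith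

theorem clampedProfile_mem_Icc {S₀ S₁ : ℝ} (h : S₀ ≤ S₁) (c x : ℝ) :
    clampedProfile S₀ S₁ c x ∈ Icc S₀ S₁ :=
  ⟨le_max_left _ _, max_le h (min_le_left _ _)⟩

theorem measurable_clampedProfile (S₀ S₁ c : ℝ) : Measurable (clampedProfile S₀ S₁ c) := by
  unfold clampedProfile
  fun_prop

section Pieces

variable {S₀ S₁ c x : ℝ}

theorem clampedProfile_eq_left (hx : x < 1) (h : c ≤ S₀ * (1 - x)) :
    clampedProfile S₀ S₁ c x = S₀ := by
  have : c / (1 - x) ≤ S₀ := (div_le_iff₀ (by linarith)).2 h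
  exact max_eq_left ((min_le_right _ _).trans this)

theorem clampedProfile_eq_div (hx : x < 1) (h₀ : S₀ * (1 - x) ≤ c) (h₁ : c ≤ S₁ * (1 - x)) :
    clampedProfile S₀ S₁ c x = c / (1 - x) := by
  have hα : 0 < 1 - x := by linarith
  rw [clampedProfile, min_eq_right ((div_le_iff₀ hα).2 h₁), max_eq_right ((le_div_iff₀ hα).2 h₀)]

theorem clampedProfile_eq_right (hS : S₀ ≤ S₁) (hx : x < 1) (h : S₁ * (1 - x) ≤ c) :
    clampedProfile S₀ S₁ c x = S₁ := by
  rw [clampedProfile, min_eq_left ((le_div_iff₀ (by linarith)).2 h), max_eq_right hS]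

end Pieces

theorem Sopt_eq_clampedProfile {S₀ S₁ x : ℝ} (hS₀ : 0 < S₀) (hS : S₀ < S₁) (hx : x < 1) :
    Sopt S₀ S₁ x = clampedProfile S₀ S₁ (S₀ / 2) x := by
  have hS₁ : 0 < S₁ := hS₀.trans hS
  unfold Sopt
  split_ifs with h₀ h₁
  · exact (clampedProfile_eq_left hx (by nlinarith)).symm
  · rw [clampedProfile_eq_div hx (by nlinarith), div_div]
    rw [lt_sub_iff_add_lt, ← lt_sub_iff_add_lt', div_lt_iff₀ (by positivity)] at h₁
    linarith
  · refine (clampedProfile_eq_right hS.le hx ?_).symm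
    rw [not_lt, sub_le_comm, le_div_iff₀ (by positivity)] at h₁
    linarith

theorem integral_lagrangian_const (c s a b : ℝ) :
    ∫ x in a..b, lagrangian c x s
      = 2 * c * s * (b - a) - s ^ 2 * ((1 - a) ^ 2 - (1 - b) ^ 2) / 2 := by
  have h : ∀ x, lagrangian c x s = (2 * c * s - s ^ 2) + s ^ 2 * x := fun x => by
    unfold lagrangian; ring
  simp only [h]
  rw [integral_add intervalIntegrable_const (intervalIntegrable_id.const_mul _),
    intervalIntegral.integral_const, intervalIntegral.integral_const_mul, integral_id, smul_eq_mul]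
  ring

theorem integral_inv_one_sub {a b : ℝ} (ha : a < 1) (hb : b < 1) :
    ∫ x in a..b, (1 - x)⁻¹ = log ((1 - a) / (1 - b)) := by
  rw [intervalIntegral.integral_comp_sub_left (fun x => x⁻¹),
    integral_inv (notMem_uIcc_of_lt (by linarith) (by linarith))]

theorem intervalIntegrable_of_abs_le {f : ℝ → ℝ} {a b C : ℝ} (hab : a ≤ b) (hf : Measurable f)
    (hC : ∀ x ∈ Icc a b, |f x| ≤ C) : IntervalIntegrable f volume a b := by
  refine intervalIntegrable_const.mono_fun' hf.aestronglyMeasurable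
    ((ae_restrict_iff' measurableSet_uIoc).2 (ae_of_all _ fun x hx => hC x ?_))
  rw [uIoc_of_le hab] at hx
  exact Ioc_subset_Icc_self hx

theorem intervalIntegrable_of_mem_Icc {f : ℝ → ℝ} {a b m M : ℝ} (hab : a ≤ b) (hf : Measurable f)
    (hfb : ∀ x ∈ Icc a b, f x ∈ Icc m M) : IntervalIntegrable f volume a b :=
  intervalIntegrable_of_abs_le hab hf fun x hx => abs_le_max_abs_abs (hfb x hx).1 (hfb x hx).2

theorem abs_lagrangian_le {S₀ S₁ c x s : ℝ} (hS₀ : 0 ≤ S₀) (hc : 0 ≤ c) (hx : x ∈ Icc (0:ℝ) 1)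
    (hs : s ∈ Icc S₀ S₁) : |lagrangian c x s| ≤ 2 * c * S₁ + S₁ ^ 2 := by
  obtain ⟨hx₀, hx₁⟩ := hx
  obtain ⟨hs₀, hs₁⟩ := hs
  have hsq : (1 - x) * s ^ 2 ≤ S₁ ^ 2 := by nlinarith
  rw [lagrangian, abs_le]
  constructor <;> nlinarith [mul_nonneg (by linarith : 0 ≤ 1 - x) (sq_nonneg s)]

theorem intervalIntegrable_lagrangian_comp {S₀ S₁ c : ℝ} {f : ℝ → ℝ} (hS₀ : 0 ≤ S₀) (hc : 0 ≤ c)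
    (hf : Measurable f) (hfb : ∀ x ∈ Icc (0:ℝ) 1, f x ∈ Icc S₀ S₁) :
    IntervalIntegrable (fun x => lagrangian c x (f x)) volume 0 1 :=
  intervalIntegrable_of_abs_le zero_le_one (by unfold lagrangian; fun_prop)
    fun x hx => abs_lagrangian_le hS₀ hc hx (hfb x hx)

theorem intervalIntegrable_lagrangian_clampedProfile {S₀ S₁ c : ℝ} (hS₀ : 0 ≤ S₀) (hS : S₀ ≤ S₁)
    (hc : 0 ≤ c) :
    IntervalIntegrable (fun x => lagrangian c x (clampedProfile S₀ S₁ c x)) volume 0 1 :=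
  intervalIntegrable_lagrangian_comp hS₀ hc (measurable_clampedProfile S₀ S₁ c)
    fun x _ => clampedProfile_mem_Icc hS c x

theorem integral_lagrangian_comp {S₀ S₁ : ℝ} {S : ℝ → ℝ} (hS₀ : 0 ≤ S₀) (hS : Measurable S)
    (hSb : ∀ x ∈ Icc (0:ℝ) 1, S x ∈ Icc S₀ S₁) (c : ℝ) :
    ∫ x in (0:ℝ)..1, lagrangian c x (S x)
      = 2 * c * (∫ x in (0:ℝ)..1, S x) - ∫ x in (0:ℝ)..1, (1 - x) * S x ^ 2 := by
  have hSi := (intervalIntegrable_of_mem_Icc zero_le_one hS hSb).const_mul (2 * c)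
  have hS2i : IntervalIntegrable (fun x => (1 - x) * S x ^ 2) volume 0 1 :=
    intervalIntegrable_of_abs_le (C := S₁ ^ 2) zero_le_one (by fun_prop) fun x hx => by
      have h₀ : 0 ≤ S x := hS₀.trans (hSb x hx).1
      rw [abs_of_nonneg (mul_nonneg (by linarith [hx.2]) (sq_nonneg _))]
      nlinarith [hx.1, hx.2, (hSb x hx).2]
  simp only [lagrangian]
  rw [intervalIntegral.integral_sub hSi hS2i, intervalIntegral.integral_const_mul]

theorem integral_mem_Icc_of_mem_Icc {S₀ S₁ : ℝ} {S : ℝ → ℝ} (hS : Measurable S)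
    (hSb : ∀ x ∈ Icc (0:ℝ) 1, S x ∈ Icc S₀ S₁) : ∫ x in (0:ℝ)..1, S x ∈ Icc S₀ S₁ := by
  have hSi := intervalIntegrable_of_mem_Icc zero_le_one hS hSb
  constructor
  · simpa using integral_mono_on zero_le_one intervalIntegrable_const hSi fun x hx => (hSb x hx).1
  · simpa using integral_mono_on zero_le_one hSi intervalIntegrable_const fun x hx => (hSb x hx).2

section ClampedIntegral

variable {S₀ S₁ c : ℝ}

theorem integral_lagrangian_clampedProfile_from {a : ℝ} (hS₀ : 0 < S₀) (hS : S₀ < S₁) (hc : 0 < c)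
    (ha₀ : 0 ≤ a) (ha : S₀ * (1 - a) ≤ c) (ha₁ : a ≤ 1 - c / S₁) :
    ∫ x in a..1, lagrangian c x (clampedProfile S₀ S₁ c x)
      = c ^ 2 * log ((1 - a) * S₁ / c) + 3 * c ^ 2 / 2 := by
  have hS₁ : 0 < S₁ := hS₀.trans hS
  set x₁ := 1 - c / S₁ with hx₁
  have hx₁1 : x₁ < 1 := by rw [hx₁]; linarith [div_pos hc hS₁]
  have haI : a ∈ uIcc (0:ℝ) 1 := mem_uIcc_of_le ha₀ (ha₁.trans hx₁1.le)
  have x₁I : x₁ ∈ uIcc (0:ℝ) 1 := mem_uIcc_of_le (ha₀.trans ha₁) hx₁1.le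
  have hint := intervalIntegrable_lagrangian_clampedProfile hS₀.le hS.le hc.le
  have hmid :
      EqOn (fun x => lagrangian c x (clampedProfile S₀ S₁ c x)) (fun x => c ^ 2 * (1 - x)⁻¹)
      (uIoo a x₁) := by
    intro x hx
    rw [uIoo_of_le ha₁] at hx
    have h₁ : c ≤ S₁ * (1 - x) := by
      rw [← div_le_iff₀' hS₁]; linarith [hx.2]
    simp only
    rw [clampedProfile_eq_div (hx.2.trans hx₁1) (by nlinarith [hx.1]) h₁, lagrangian]
    field_simp
    ring
  have htail :
      EqOn (fun x => lagrangian c x (clampedProfile S₀ S₁ c x)) (fun x => lagrangian c x S₁)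
      (uIoo x₁ 1) := by
    intro x hx
    rw [uIoo_of_le hx₁1.le] at hx
    have h₁ : S₁ * (1 - x) ≤ c := by
      rw [← le_div_iff₀' hS₁]; linarith [hx.1]
    simp only
    rw [clampedProfile_eq_right hS.le hx.2 h₁]
  rw [← integral_add_adjacent_intervals
      (hint.mono_set (uIcc_subset_uIcc haI x₁I))
      (hint.mono_set (uIcc_subset_uIcc x₁I right_mem_uIcc)),
    integral_congr_uIoo hmid, integral_congr_uIoo htail, intervalIntegral.integral_const_mul,
    integral_inv_one_sub (ha₁.trans_lt hx₁1) hx₁1, integral_lagrangian_const]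
  have h1x₁ : 1 - x₁ = c / S₁ := by rw [hx₁]; ring
  rw [h1x₁]
  field_simp
  ring

theorem integral_lagrangian_clampedProfile_of_le (hS₀ : 0 < S₀) (hS : S₀ < S₁) (hc : 0 < c)
    (hcS₀ : c ≤ S₀) :
    ∫ x in (0:ℝ)..1, lagrangian c x (clampedProfile S₀ S₁ c x)
      = 2 * c * S₀ - S₀ ^ 2 / 2 + c ^ 2 * log (S₁ / S₀) := by
  set x₀ := 1 - c / S₀ with hx₀
  have h1x₀ : 1 - x₀ = c / S₀ := by rw [hx₀]; ring
  have hx₀0 : 0 ≤ x₀ := by rw [hx₀, sub_nonneg, div_le_one hS₀]; exact hcS₀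
  have hx₀1 : x₀ ≤ 1 := by rw [hx₀]; linarith [div_pos hc hS₀]
  have hx₀x₁ : x₀ ≤ 1 - c / S₁ := by
    rw [hx₀]; linarith [div_le_div_of_nonneg_left hc.le hS₀ hS.le]
  have hhead :
      EqOn (fun x => lagrangian c x (clampedProfile S₀ S₁ c x)) (fun x => lagrangian c x S₀)
      (uIoo 0 x₀) := by
    intro x hx
    rw [uIoo_of_le hx₀0] at hx
    have h₀ : c ≤ S₀ * (1 - x) := by
      rw [← div_le_iff₀' hS₀]; linarith [hx.2]
    simp only
    rw [clampedProfile_eq_left (hx.2.trans_le hx₀1) h₀]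
  have hint := intervalIntegrable_lagrangian_clampedProfile hS₀.le hS.le hc.le
  have x₀I : x₀ ∈ uIcc (0:ℝ) 1 := mem_uIcc_of_le hx₀0 hx₀1
  rw [← integral_add_adjacent_intervals (hint.mono_set (uIcc_subset_uIcc left_mem_uIcc x₀I))
      (hint.mono_set (uIcc_subset_uIcc x₀I right_mem_uIcc)),
    integral_congr_uIoo hhead, integral_lagrangian_const,
    integral_lagrangian_clampedProfile_from hS₀ hS hc hx₀0 (by rw [h1x₀]; field_simp; rfl) hx₀x₁,
    h1x₀, hx₀]
  field_simp
  ring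

theorem integral_lagrangian_clampedProfile_of_lt (hS₀ : 0 < S₀) (hS : S₀ < S₁) (hS₀c : S₀ < c)
    (hcS₁ : c ≤ S₁) :
    ∫ x in (0:ℝ)..1, lagrangian c x (clampedProfile S₀ S₁ c x)
      = c ^ 2 * log (S₁ / c) + 3 * c ^ 2 / 2 := by
  have hc : 0 < c := hS₀.trans hS₀c
  have h := integral_lagrangian_clampedProfile_from hS₀ hS hc le_rfl (by linarith)
    (by rw [sub_nonneg, div_le_one (hc.trans_le hcS₁)]; exact hcS₁)
  rwa [sub_zero, one_mul] at h

theorem eq_half_of_le_integral_lagrangian_clampedProfile (hS₀ : 0 < S₀) (hS : S₀ < S₁)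
    (hc : 0 < c) (hcS₁ : c ≤ S₁)
    (h : (2 + log (S₁ / S₀)) * c ^ 2
      ≤ ∫ x in (0:ℝ)..1, lagrangian c x (clampedProfile S₀ S₁ c x)) :
    c = S₀ / 2 := by
  rcases le_or_gt c S₀ with hcS₀ | hS₀c
  · rw [integral_lagrangian_clampedProfile_of_le hS₀ hS hc hcS₀] at h
    nlinarith [sq_nonneg (2 * c - S₀)]
  · rw [integral_lagrangian_clampedProfile_of_lt hS₀ hS hS₀c hcS₁] at h
    have hlog : log (S₁ / c) < log (S₁ / S₀) :=
      log_lt_log (div_pos (hS₀.trans hS) hc) (div_lt_div_of_pos_left (hS₀.trans hS) hS₀ hS₀c)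
    nlinarith [pow_pos hc 2]

end ClampedIntegral

section Comparison

variable {S₀ S₁ c : ℝ} {S : ℝ → ℝ}

theorem integral_lagrangian_le_clampedProfile (hS₀ : 0 ≤ S₀) (hc : 0 ≤ c) (hS : Measurable S)
    (hSb : ∀ x ∈ Icc (0:ℝ) 1, S x ∈ Icc S₀ S₁) :
    ∫ x in (0:ℝ)..1, lagrangian c x (S x)
      ≤ ∫ x in (0:ℝ)..1, lagrangian c x (clampedProfile S₀ S₁ c x) := by
  have hS01 : S₀ ≤ S₁ := nonempty_Icc.1 ⟨S 0, hSb 0 ⟨le_rfl, zero_le_one⟩⟩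
  refine integral_mono_on_of_le_Ioo zero_le_one (intervalIntegrable_lagrangian_comp hS₀ hc hS hSb)
    (intervalIntegrable_lagrangian_clampedProfile hS₀ hS01 hc) fun x hx => ?_
  have := lagrangian_add_sq_sub_clampedProfile_le (S₁ := S₁) (c := c) hx.2
    (hSb x (Ioo_subset_Icc_self hx))
  linarith [mul_nonneg (by linarith [hx.2] : (0:ℝ) ≤ 1 - x)
    (sq_nonneg (S x - clampedProfile S₀ S₁ c x))]

theorem ae_eq_clampedProfile_of_integral_lagrangian_eq (hS₀ : 0 ≤ S₀) (hc : 0 ≤ c)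
    (hS : Measurable S) (hSb : ∀ x ∈ Icc (0:ℝ) 1, S x ∈ Icc S₀ S₁)
    (h : ∫ x in (0:ℝ)..1, lagrangian c x (S x)
      = ∫ x in (0:ℝ)..1, lagrangian c x (clampedProfile S₀ S₁ c x)) :
    ∀ᵐ x ∂volume.restrict (Ioo (0:ℝ) 1), S x = clampedProfile S₀ S₁ c x := by
  set T := clampedProfile S₀ S₁ c
  set gap := fun x => lagrangian c x (T x) - lagrangian c x (S x)
  have hS01 : S₀ ≤ S₁ := nonempty_Icc.1 ⟨S 0, hSb 0 ⟨le_rfl, zero_le_one⟩⟩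
  have hgap_integrable : IntervalIntegrable gap volume 0 1 :=
    (intervalIntegrable_lagrangian_clampedProfile hS₀ hS01 hc).sub
      (intervalIntegrable_lagrangian_comp hS₀ hc hS hSb)
  have hgap : ∀ x ∈ Ioo (0:ℝ) 1, (1 - x) * (S x - T x) ^ 2 ≤ gap x := fun x hx => by
    have := lagrangian_add_sq_sub_clampedProfile_le (S₁ := S₁) (c := c) hx.2
      (hSb x (Ioo_subset_Icc_self hx))
    simp only [gap]
    linarith
  have hgap_nonneg : ∀ x ∈ Ioo (0:ℝ) 1, 0 ≤ gap x := fun x hx =>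
    (mul_nonneg (by linarith [hx.2]) (sq_nonneg _)).trans (hgap x hx)
  have hgap_int : ∫ x in (0:ℝ)..1, gap x = 0 := by
    rw [intervalIntegral.integral_sub (intervalIntegrable_lagrangian_clampedProfile hS₀ hS01 hc)
      (intervalIntegrable_lagrangian_comp hS₀ hc hS hSb), h, sub_self]
  have hgap_ae : gap =ᵐ[volume.restrict (Ioo (0:ℝ) 1)] 0 := by
    rw [restrict_Ioo_eq_restrict_Ioc]
    refine (integral_eq_zero_iff_of_le_of_nonneg_ae zero_le_one ?_ hgap_integrable).1 hgap_int
    rw [← restrict_Ioo_eq_restrict_Ioc]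
    exact ae_restrict_of_forall_mem measurableSet_Ioo hgap_nonneg
  filter_upwards [hgap_ae, ae_restrict_mem measurableSet_Ioo] with x hx₀ hx
  have hsq : (1 - x) * (S x - T x) ^ 2 ≤ 0 := (hgap x hx).trans_eq hx₀
  have : (S x - T x) ^ 2 = 0 :=
    le_antisymm (nonpos_of_mul_nonpos_right hsq (by linarith [hx.2])) (sq_nonneg _)
  exact sub_eq_zero.1 (pow_eq_zero_iff two_ne_zero |>.1 this)

end Comparison

theorem maximizer_unique_ae (S₀ S₁ : ℝ) (hS₀ : 0 < S₀) (hS₀S₁ : S₀ < S₁)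
    (S : ℝ → ℝ) (hmeas : Measurable S)
    (hbound : ∀ x ∈ Set.Icc (0:ℝ) 1, S₀ ≤ S x ∧ S x ≤ S₁)
    (heq : (1/2) * (∫ x in (0:ℝ)..1, S x)^2 =
      (1 + (1/2) * Real.log (S₁ / S₀)) * ∫ x in (0:ℝ)..1, (1 - x) * (S x)^2) :
    ∀ᵐ x ∂(MeasureTheory.volume.restrict (Set.Icc (0:ℝ) 1)), S x = Sopt S₀ S₁ x := by
  have hM : 1 < 2 + log (S₁ / S₀) := by linarith [log_pos ((one_lt_div hS₀).2 hS₀S₁)]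
  obtain ⟨ht₀, ht₁⟩ := integral_mem_Icc_of_mem_Icc hmeas hbound
  set t := ∫ x in (0:ℝ)..1, S x
  set c := t / (2 + log (S₁ / S₀)) with hc_def
  have hc : 0 < c := div_pos (hS₀.trans_le ht₀) (by linarith)
  have hcS₁ : c ≤ S₁ := by
    rw [div_le_iff₀ (by linarith)]; nlinarith
  have hval : ∫ x in (0:ℝ)..1, lagrangian c x (S x) = (2 + log (S₁ / S₀)) * c ^ 2 := by
    rw [integral_lagrangian_comp hS₀.le hmeas hbound, hc_def]
    field_simp
    linarith
  have hc_half : c = S₀ / 2 := eq_half_of_le_integral_lagrangian_clampedProfile hS₀ hS₀S₁ hc hcS₁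
    (hval ▸ integral_lagrangian_le_clampedProfile hS₀.le hc.le hmeas hbound)
  have hae := ae_eq_clampedProfile_of_integral_lagrangian_eq hS₀.le hc.le hmeas hbound (by
    rw [hval, integral_lagrangian_clampedProfile_of_le hS₀ hS₀S₁ hc (by linarith), hc_half]
    ring)
  rw [← Measure.restrict_congr_set Ioo_ae_eq_Icc]
  filter_upwards [hae, ae_restrict_mem measurableSet_Ioo] with x hx hx01
  rw [hx, hc_half, Sopt_eq_clampedProfile hS₀ hS₀S₁ hx01.2]
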